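/- arXiv:2112.00269 — 9 statements merged into one kernel-verified Lean document; each statement's English description precedes it below -/
import Mathlib

section
/- Let r ∈ (0,1), ρ ∈ (0,1] and α ∈ [0,1] be real numbers, and set β₂ = rρ/(2(1−(1−α)(1−ρ))) and β₃ = (1−r)/(2(1−α(1−ρ))). Then β₂/(β₂+β₃) ≤ r. (Consequently, in the BPA model the limiting ratio of the expected sum of k-hop active gains among minority nodes over that among all nodes never exceeds the minority population ratio r.) -/
/-! Clearing denominators, `β₂/(β₂+β₃) ≤ r` becomes `ρ (1 − α(1−ρ)) ≤ 1 − (1−α)(1−ρ)`,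
and the difference of the two sides is `α (1 − ρ²) ≥ 0`. -/

theorem div_add_le_iff_mul_one_sub_le {a b r : ℝ} (hab : 0 < a + b) :
    a / (a + b) ≤ r ↔ a * (1 - r) ≤ r * b := by
  rw [div_le_iff₀ hab]
  constructor <;> intro h <;> linarith

theorem le_one_sub_mul_one_sub {a ρ : ℝ} (ha1 : a ≤ 1) (hρ1 : ρ ≤ 1) :
    ρ ≤ 1 - a * (1 - ρ) := by
  nlinarith [mul_le_mul_of_nonneg_right ha1 (sub_nonneg.2 hρ1)]

theorem mul_one_sub_mul_one_sub_le {α ρ : ℝ} (hα : 0 ≤ α) (hρ : ρ ^ 2 ≤ 1) :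
    ρ * (1 - α * (1 - ρ)) ≤ 1 - (1 - α) * (1 - ρ) := by
  have h : 1 - (1 - α) * (1 - ρ) - ρ * (1 - α * (1 - ρ)) = α * (1 - ρ ^ 2) := by ring
  linarith [mul_nonneg hα (sub_nonneg.2 hρ)]

/-- For `r ∈ (0,1)`, `ρ ∈ (0,1]`, `α ∈ [0,1]`, with
`β₂ = rρ/(2(1−(1−α)(1−ρ)))` and `β₃ = (1−r)/(2(1−α(1−ρ)))`,
we have `β₂/(β₂+β₃) ≤ r`. -/
theorem stmt_0 (r ρ α : ℝ) (hr : 0 < r) (hr1 : r < 1)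
    (hρ : 0 < ρ) (hρ1 : ρ ≤ 1) (hα : 0 ≤ α) (hα1 : α ≤ 1)
    (β₂ β₃ : ℝ)
    (hβ₂ : β₂ = r * ρ / (2 * (1 - (1 - α) * (1 - ρ))))
    (hβ₃ : β₃ = (1 - r) / (2 * (1 - α * (1 - ρ)))) :
    β₂ / (β₂ + β₃) ≤ r := by
  have hD₂ := hρ.trans_le (le_one_sub_mul_one_sub (by linarith : 1 - α ≤ 1) hρ1)
  have hD₃ := hρ.trans_le (le_one_sub_mul_one_sub hα1 hρ1)
  have hratio : ρ / (1 - (1 - α) * (1 - ρ)) ≤ 1 / (1 - α * (1 - ρ)) := by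
    rw [div_le_div_iff₀ hD₂ hD₃, one_mul]
    exact mul_one_sub_mul_one_sub_le hα (pow_le_one₀ hρ.le hρ1)
  have hβ₂pos : 0 < β₂ := by rw [hβ₂]; positivity
  have hβ₃pos : 0 < β₃ := by rw [hβ₃]; exact div_pos (by linarith) (by positivity)
  rw [div_add_le_iff_mul_one_sub_le (by positivity)]
  have hscale : 0 ≤ r * (1 - r) / 2 := by have := sub_pos.2 hr1; positivity
  calc β₂ * (1 - r) = r * (1 - r) / 2 * (ρ / (1 - (1 - α) * (1 - ρ))) := by rw [hβ₂]; field_simp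
    _ ≤ r * (1 - r) / 2 * (1 / (1 - α * (1 - ρ))) := by gcongr
    _ = r * β₃ := by rw [hβ₃]; field_simp
end

section
/- For every r ∈ (0, 1/2) and every ρ ∈ (0, 1], there exists exactly one α ∈ [0,1] satisfying the BPA fixed-point equation 2α = 1 − (1−r)(1−α)/(1−α(1−ρ)) + rα/(1−(1−α)(1−ρ)). -/
open Set

/-! Cleared of its denominators, the BPA equation is a cubic in `α` with nonnegative leading
coefficient, positive at `0` and negative at `1`. Such a cubic has a root in `[0, 1]` by the
intermediate value theorem, and at most one: two roots `x ≠ y` there would factor it as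
`(t - x) (t - y) (a t + e)`, and `p 0 = x y e > 0` forces `e > 0`, whence
`p 1 = (1 - x) (1 - y) (a + e) ≥ 0`. -/

section Cubic

variable {a b c d x y : ℝ}

theorem cubic_eq_mul_of_roots (hxy : x ≠ y) (hx : a * x ^ 3 + b * x ^ 2 + c * x + d = 0)
    (hy : a * y ^ 3 + b * y ^ 2 + c * y + d = 0) (t : ℝ) :
    a * t ^ 3 + b * t ^ 2 + c * t + d = (t - x) * (t - y) * (a * t + (b + a * (x + y))) := by
  -- the difference is affine in `t` and vanishes at `x` and `y`
  have key : (a * t ^ 3 + b * t ^ 2 + c * t + d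
      - (t - x) * (t - y) * (a * t + (b + a * (x + y)))) * (x - y)
      = (t - y) * (a * x ^ 3 + b * x ^ 2 + c * x + d)
        - (t - x) * (a * y ^ 3 + b * y ^ 2 + c * y + d) := by ring
  rw [hx, hy, mul_zero, mul_zero, sub_zero] at key
  exact sub_eq_zero.mp ((mul_eq_zero.mp key).resolve_right (sub_ne_zero.mpr hxy))

theorem eq_of_cubic_roots_mem_Icc (ha : 0 ≤ a) (hd : 0 < d) (h1 : a + b + c + d < 0)
    (hx : x ∈ Icc (0 : ℝ) 1) (hy : y ∈ Icc (0 : ℝ) 1)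
    (hpx : a * x ^ 3 + b * x ^ 2 + c * x + d = 0) (hpy : a * y ^ 3 + b * y ^ 2 + c * y + d = 0) :
    x = y := by
  by_contra hxy
  have factor := cubic_eq_mul_of_roots hxy hpx hpy
  set e := b + a * (x + y)
  have he : 0 < e := by
    have h0 : 0 < x * y * e := by linarith [factor 0]
    exact pos_of_mul_pos_right h0 (mul_nonneg hx.1 hy.1)
  have : 0 ≤ (1 - x) * (1 - y) * (a + e) :=
    mul_nonneg (mul_nonneg (sub_nonneg.mpr hx.2) (sub_nonneg.mpr hy.2)) (by linarith)
  linarith [factor 1]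

end Cubic

section BPA

variable {r ρ α : ℝ}

theorem bpa_equation_iff_cubic (hρ : 0 < ρ) (hα : α ∈ Icc (0 : ℝ) 1) :
    2 * α = 1 - (1 - r) * (1 - α) / (1 - α * (1 - ρ)) + r * α / (1 - (1 - α) * (1 - ρ)) ↔
      2 * (1 - ρ) ^ 2 * α ^ 3 + -(3 * (1 - ρ) ^ 2 - (1 - ρ) + 2 * r * (1 - ρ)) * α ^ 2
        + -(1 - (1 - ρ) ^ 2 - 2 * r * (1 - ρ)) * α + r * ρ = 0 := by
  obtain ⟨hα0, hα1⟩ := hα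
  have h₁ : 1 - α * (1 - ρ) ≠ 0 := by
    nlinarith [mul_nonneg (sub_nonneg.2 hα1) hρ.le, mul_nonneg hα0 (sq_nonneg ρ)]
  have h₂ : 1 - (1 - α) * (1 - ρ) ≠ 0 := by
    nlinarith [mul_nonneg hα0 hρ.le, mul_nonneg (sub_nonneg.2 hα1) (sq_nonneg ρ)]
  constructor
  · intro h
    field_simp at h
    linear_combination -h
  · intro h
    field_simp
    linear_combination -h

end BPA

theorem stmt_1_general (r ρ : ℝ) (hr : 0 < r) (hr1 : r < 1/2) (hρ : 0 < ρ) :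
    ∃! α : ℝ, α ∈ Set.Icc (0:ℝ) 1 ∧
      2 * α = 1 - (1 - r) * (1 - α) / (1 - α * (1 - ρ))
        + r * α / (1 - (1 - α) * (1 - ρ)) := by
  set p : ℝ → ℝ := fun t => 2 * (1 - ρ) ^ 2 * t ^ 3
    + -(3 * (1 - ρ) ^ 2 - (1 - ρ) + 2 * r * (1 - ρ)) * t ^ 2
    + -(1 - (1 - ρ) ^ 2 - 2 * r * (1 - ρ)) * t + r * ρ with hp
  have hp0 : p 0 = r * ρ := by simp only [hp]; ring
  have hp1 : p 1 = -((1 - r) * ρ) := by simp only [hp]; ring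
  have hrρ : 0 < r * ρ := mul_pos hr hρ
  have hp1_neg : p 1 < 0 := by
    rw [hp1]
    exact neg_neg_iff_pos.mpr (mul_pos (by linarith) hρ)
  obtain ⟨α, hα, hpα⟩ : ∃ α ∈ Icc (0 : ℝ) 1, p α = 0 :=
    intermediate_value_Icc' zero_le_one (by fun_prop) ⟨hp1_neg.le, hp0 ▸ hrρ.le⟩
  refine ⟨α, ⟨hα, (bpa_equation_iff_cubic hρ hα).2 hpα⟩, fun β ⟨hβ, hβeq⟩ => ?_⟩
  exact eq_of_cubic_roots_mem_Icc (by positivity) hrρ (by linarith [hp1_neg]) hβ hα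
    ((bpa_equation_iff_cubic hρ hβ).1 hβeq) hpα

/-- For every `r ∈ (0, 1/2)` and `ρ ∈ (0, 1]`, there is exactly one `α ∈ [0,1]`
satisfying the BPA fixed-point equation
`2α = 1 − (1−r)(1−α)/(1−α(1−ρ)) + rα/(1−(1−α)(1−ρ))`. -/
theorem stmt_1 (r ρ : ℝ) (hr : 0 < r) (hr1 : r < 1/2) (hρ : 0 < ρ) (hρ1 : ρ ≤ 1) :
    ∃! α : ℝ, α ∈ Set.Icc (0:ℝ) 1 ∧
      2 * α = 1 - (1 - r) * (1 - α) / (1 - α * (1 - ρ))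
        + r * α / (1 - (1 - α) * (1 - ρ)) :=
  stmt_1_general r ρ hr hr1 hρ
end

section
/- For r ∈ (0, 1/2) and ρ ∈ (0, 1], every solution α ∈ [0,1] of the BPA fixed-point equation satisfies 0 < α < 1/2; in particular, there exists a solution in the open interval (0, 1/2). -/
/-!
Clearing the two (positive) denominators turns the fixed-point equation into `P(α) = 0` for a
cubic `P`, which regroups as
`P(α) = (2α - 1)(ρ/2 + α(1-α)(1-ρ)²) + (1/2 - r)(ρ + 2α(1-α)(1-ρ))`.
For `α ∈ [1/2, 1]` both summands are nonnegative and the second is positive, so `P > 0` there,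
while `P(0) = -rρ < 0`. Hence every root in `[0,1]` lies in `(0, 1/2)`, and the intermediate
value theorem on `[0, 1/2]` provides one.
-/

noncomputable def bpaRhs (r ρ α : ℝ) : ℝ :=
  1 - (1 - r) * (1 - α) / (1 - α * (1 - ρ)) + r * α / (1 - (1 - α) * (1 - ρ))

noncomputable def bpaResidual (r ρ α : ℝ) : ℝ :=
  (2 * α - 1) * (ρ / 2 + α * (1 - α) * (1 - ρ) ^ 2)
    + (1 / 2 - r) * (ρ + 2 * α * (1 - α) * (1 - ρ))

lemma one_sub_mul_one_sub_pos {ρ a : ℝ} (hρ : 0 < ρ) (h0 : 0 ≤ a) (h1 : a ≤ 1) :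
    0 < 1 - a * (1 - ρ) := by
  rcases le_total ρ 1 with h | h <;> nlinarith

lemma sub_bpaRhs_mul_denoms {r ρ α : ℝ} (h1 : 1 - α * (1 - ρ) ≠ 0)
    (h2 : 1 - (1 - α) * (1 - ρ) ≠ 0) :
    (2 * α - bpaRhs r ρ α) * ((1 - α * (1 - ρ)) * (1 - (1 - α) * (1 - ρ))) =
      bpaResidual r ρ α := by
  unfold bpaRhs bpaResidual
  field_simp
  ring

lemma eq_bpaRhs_iff_bpaResidual_eq_zero {r ρ α : ℝ} (hρ : 0 < ρ) (h0 : 0 ≤ α) (h1 : α ≤ 1) :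
    2 * α = bpaRhs r ρ α ↔ bpaResidual r ρ α = 0 := by
  have hD1 := one_sub_mul_one_sub_pos hρ h0 h1
  have hD2 := one_sub_mul_one_sub_pos hρ (sub_nonneg.2 h1) (sub_le_self 1 h0)
  rw [← sub_bpaRhs_mul_denoms hD1.ne' hD2.ne', mul_eq_zero, sub_eq_zero,
    or_iff_left (mul_pos hD1 hD2).ne']

lemma bpaResidual_zero (r ρ : ℝ) : bpaResidual r ρ 0 = -(r * ρ) := by
  unfold bpaResidual
  ring

lemma bpaResidual_pos_of_half_le {r ρ α : ℝ} (hr : r < 1 / 2) (hρ : 0 < ρ) (h0 : 1 / 2 ≤ α)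
    (h1 : α ≤ 1) :
    0 < bpaResidual r ρ α := by
  have hα : 0 ≤ α * (1 - α) := mul_nonneg (by linarith) (by linarith)
  have hα' : α * (1 - α) ≤ 1 / 4 := by nlinarith [sq_nonneg (α - 1 / 2)]
  have hfirst : 0 ≤ (2 * α - 1) * (ρ / 2 + α * (1 - α) * (1 - ρ) ^ 2) := by
    apply mul_nonneg <;> nlinarith [sq_nonneg (1 - ρ)]
  have hsecond : 0 < (1 / 2 - r) * (ρ + 2 * α * (1 - α) * (1 - ρ)) := by
    apply mul_pos <;> nlinarith
  unfold bpaResidual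
  linarith

lemma continuous_bpaResidual (r ρ : ℝ) : Continuous (bpaResidual r ρ) := by
  unfold bpaResidual
  fun_prop

theorem stmt_2_general (r ρ : ℝ) (hr : 0 < r) (hr1 : r < 1/2) (hρ : 0 < ρ) :
    (∀ α ∈ Set.Icc (0:ℝ) 1,
      2 * α = 1 - (1 - r) * (1 - α) / (1 - α * (1 - ρ))
        + r * α / (1 - (1 - α) * (1 - ρ)) → 0 < α ∧ α < 1/2) ∧
    (∃ α ∈ Set.Ioo (0:ℝ) (1/2),
      2 * α = 1 - (1 - r) * (1 - α) / (1 - α * (1 - ρ))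
        + r * α / (1 - (1 - α) * (1 - ρ))) := by
  have hneg : bpaResidual r ρ 0 < 0 := by
    simpa only [bpaResidual_zero, neg_lt_zero] using mul_pos hr hρ
  constructor
  · rintro α ⟨h0, h1⟩ hα
    have hres : bpaResidual r ρ α = 0 := (eq_bpaRhs_iff_bpaResidual_eq_zero hρ h0 h1).1 hα
    refine ⟨h0.lt_of_ne ?_,
      lt_of_not_ge fun h2 => (bpaResidual_pos_of_half_le hr1 hρ h2 h1).ne' hres⟩
    rintro rfl
    exact hneg.ne hres
  · obtain ⟨α, hα, hres⟩ := intermediate_value_Ioo (by norm_num : (0:ℝ) ≤ 1 / 2)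
      (continuous_bpaResidual r ρ).continuousOn
      ⟨hneg, bpaResidual_pos_of_half_le hr1 hρ le_rfl (by norm_num)⟩
    exact ⟨α, hα, (eq_bpaRhs_iff_bpaResidual_eq_zero hρ hα.1.le (by linarith [hα.2])).2 hres⟩

/-- For `r ∈ (0,1/2)` and `ρ ∈ (0,1]`, every solution `α ∈ [0,1]` of the BPA
fixed-point equation satisfies `0 < α < 1/2`; in particular there exists a
solution in the open interval `(0, 1/2)`. -/
theorem stmt_2 (r ρ : ℝ) (hr : 0 < r) (hr1 : r < 1/2) (hρ : 0 < ρ) (hρ1 : ρ ≤ 1) :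
    (∀ α ∈ Set.Icc (0:ℝ) 1,
      2 * α = 1 - (1 - r) * (1 - α) / (1 - α * (1 - ρ))
        + r * α / (1 - (1 - α) * (1 - ρ)) → 0 < α ∧ α < 1/2) ∧
    (∃ α ∈ Set.Ioo (0:ℝ) (1/2),
      2 * α = 1 - (1 - r) * (1 - α) / (1 - α * (1 - ρ))
        + r * α / (1 - (1 - α) * (1 - ρ))) :=
  stmt_2_general r ρ hr hr1 hρ
end

section
/- Let r ∈ (0, 1/2), ρ ∈ (0, 1), and let α ∈ (0, 1/2) satisfy the BPA fixed-point equation. With β₁ = r/(2(1−(1−α)(1−ρ))), β₂ = rρ/(2(1−(1−α)(1−ρ))), β₃ = (1−r)/(2(1−α(1−ρ))) and β₄ = (1−r)ρ/(2(1−α(1−ρ))), it holds that β₁ + β₄ < β₂ + β₃. -/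
/-!
Put `D₁ = 1 − (1−α)(1−ρ)` and `D₂ = 1 − α(1−ρ)`. Then `β₂ + β₃ − β₁ − β₄ = (1−ρ)/2 · ((1−r)/D₂ − r/D₁)`,
so it suffices that `r/D₁ < (1−r)/D₂`. The fixed-point equation reads
`(1−α)·(1−r)/D₂ − α·r/D₁ = 1 − 2α`; as `1 − 2α > 0`, if `(1−r)/D₂ ≤ r/D₁` then both quotients are
at least `1`, i.e. `D₁ ≤ r` and `D₂ ≤ 1 − r`, contradicting `D₁ + D₂ = 1 + ρ > 1`.
-/

lemma one_le_of_mul_sub_mul_eq {a x y : ℝ} (ha₀ : 0 ≤ a) (ha : a < 1 / 2)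
    (h : y * (1 - a) - x * a = 1 - 2 * a) (hyx : y ≤ x) : 1 ≤ y := by
  nlinarith [mul_le_mul_of_nonneg_left hyx ha₀]

lemma bpa_div_lt_div {r ρ α : ℝ} (hρ : 0 < ρ) (hα : 0 < α) (hα1 : α < 1 / 2)
    (hfix : 2 * α = 1 - (1 - r) * (1 - α) / (1 - α * (1 - ρ))
        + r * α / (1 - (1 - α) * (1 - ρ))) :
    r / (1 - (1 - α) * (1 - ρ)) < (1 - r) / (1 - α * (1 - ρ)) := by
  have hD₁ : 0 < 1 - (1 - α) * (1 - ρ) := by nlinarith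
  have hD₂ : 0 < 1 - α * (1 - ρ) := by nlinarith
  have hmean : (1 - r) / (1 - α * (1 - ρ)) * (1 - α) - r / (1 - (1 - α) * (1 - ρ)) * α
      = 1 - 2 * α := by
    rw [div_mul_eq_mul_div, div_mul_eq_mul_div]
    linarith
  by_contra! hle
  have hy := one_le_of_mul_sub_mul_eq hα.le hα1 hmean hle
  have hD₂_le : 1 - α * (1 - ρ) ≤ 1 - r := (one_le_div hD₂).mp hy
  have hD₁_le : 1 - (1 - α) * (1 - ρ) ≤ r := (one_le_div hD₁).mp (hy.trans hle)
  nlinarith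

theorem stmt_4_general (r ρ α : ℝ) (hρ : 0 < ρ) (hρ1 : ρ < 1)
    (hα : 0 < α) (hα1 : α < 1/2)
    (hfix : 2 * α = 1 - (1 - r) * (1 - α) / (1 - α * (1 - ρ))
        + r * α / (1 - (1 - α) * (1 - ρ)))
    (β₁ β₂ β₃ β₄ : ℝ)
    (hβ₁ : β₁ = r / (2 * (1 - (1 - α) * (1 - ρ))))
    (hβ₂ : β₂ = r * ρ / (2 * (1 - (1 - α) * (1 - ρ))))
    (hβ₃ : β₃ = (1 - r) / (2 * (1 - α * (1 - ρ))))
    (hβ₄ : β₄ = (1 - r) * ρ / (2 * (1 - α * (1 - ρ)))) :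
    β₁ + β₄ < β₂ + β₃ := by
  have hD₁ : 0 < 1 - (1 - α) * (1 - ρ) := by nlinarith
  have hD₂ : 0 < 1 - α * (1 - ρ) := by nlinarith
  have hgap : β₂ + β₃ - (β₁ + β₄) = (1 - ρ) / 2 *
      ((1 - r) / (1 - α * (1 - ρ)) - r / (1 - (1 - α) * (1 - ρ))) := by
    subst hβ₁ hβ₂ hβ₃ hβ₄
    field_simp
    ring
  have hpos := mul_pos (half_pos (sub_pos.mpr hρ1))
    (sub_pos.mpr (bpa_div_lt_div hρ hα hα1 hfix))
  linarith

/-- For `r ∈ (0,1/2)`, `ρ ∈ (0,1)`, and a solution `α ∈ (0,1/2)` of the BPA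
fixed-point equation, with `β₁ = r/(2(1−(1−α)(1−ρ)))`, `β₂ = rρ/(2(1−(1−α)(1−ρ)))`,
`β₃ = (1−r)/(2(1−α(1−ρ)))`, `β₄ = (1−r)ρ/(2(1−α(1−ρ)))`, we have `β₁ + β₄ < β₂ + β₃`. -/
theorem stmt_4 (r ρ α : ℝ) (hr : 0 < r) (hr1 : r < 1/2) (hρ : 0 < ρ) (hρ1 : ρ < 1)
    (hα : 0 < α) (hα1 : α < 1/2)
    (hfix : 2 * α = 1 - (1 - r) * (1 - α) / (1 - α * (1 - ρ))
        + r * α / (1 - (1 - α) * (1 - ρ)))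
    (β₁ β₂ β₃ β₄ : ℝ)
    (hβ₁ : β₁ = r / (2 * (1 - (1 - α) * (1 - ρ))))
    (hβ₂ : β₂ = r * ρ / (2 * (1 - (1 - α) * (1 - ρ))))
    (hβ₃ : β₃ = (1 - r) / (2 * (1 - α * (1 - ρ))))
    (hβ₄ : β₄ = (1 - r) * ρ / (2 * (1 - α * (1 - ρ)))) :
    β₁ + β₄ < β₂ + β₃ :=
  stmt_4_general r ρ α hρ hρ1 hα hα1 hfix β₁ β₂ β₃ β₄ hβ₁ hβ₂ hβ₃ hβ₄
end

section
/- Fix r ∈ (0, 1/2) and, for each ρ ∈ (0, 1], let α*(ρ) denote a solution in [0,1] of the BPA fixed-point equation with parameters r and ρ. Then α*(ρ) → r as ρ → 0⁺, and consequently α*(ρ)/(1−α*(ρ)) → r/(1−r) as ρ → 0⁺ (the 1-hop minority-to-majority gain ratio tends to the population ratio). -/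
/-!
Writing `a x := x ρ / (1 - x (1 - ρ))`, the fixed-point equation reads
`2 (α - r) = (1 - r) a α - r a (1 - α)`. Since `0 ≤ a ≤ 1`, this first traps `α` in
`[r/2, (1 + r)/2]`; then `(1 - x) a x ≤ x ρ` turns both terms into `O(ρ)`, giving
`|α - r| ≤ ρ` for every `ρ > 0`.
-/

open Filter Topology

noncomputable def bpaDamped (ρ x : ℝ) : ℝ := x * ρ / (1 - x * (1 - ρ))

section bpaDamped

variable {ρ x : ℝ}

lemma one_sub_mul_one_sub_pos_s5 (hρ : 0 < ρ) (hx0 : 0 ≤ x) (hx1 : x ≤ 1) :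
    0 < 1 - x * (1 - ρ) := by
  rcases le_total ρ 1 with hρ1 | hρ1 <;> nlinarith

lemma bpaDamped_nonneg (hρ : 0 < ρ) (hx0 : 0 ≤ x) (hx1 : x ≤ 1) : 0 ≤ bpaDamped ρ x :=
  div_nonneg (mul_nonneg hx0 hρ.le) (one_sub_mul_one_sub_pos_s5 hρ hx0 hx1).le

lemma bpaDamped_le_one (hρ : 0 < ρ) (hx0 : 0 ≤ x) (hx1 : x ≤ 1) : bpaDamped ρ x ≤ 1 := by
  rw [bpaDamped, div_le_one (one_sub_mul_one_sub_pos_s5 hρ hx0 hx1)]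
  linarith

lemma one_sub_bpaDamped (hρ : 0 < ρ) (hx0 : 0 ≤ x) (hx1 : x ≤ 1) :
    1 - bpaDamped ρ x = (1 - x) / (1 - x * (1 - ρ)) := by
  have := one_sub_mul_one_sub_pos_s5 hρ hx0 hx1
  rw [bpaDamped]
  field_simp
  ring

-- The denominator is at least `1 - x`.
lemma one_sub_mul_bpaDamped_le (hρ : 0 < ρ) (hx0 : 0 ≤ x) (hx1 : x ≤ 1) :
    (1 - x) * bpaDamped ρ x ≤ x * ρ := by
  have hD := one_sub_mul_one_sub_pos_s5 hρ hx0 hx1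
  rw [bpaDamped, mul_div_assoc', div_le_iff₀ hD]
  nlinarith [mul_nonneg hx0 hρ.le]

end bpaDamped

section bpaEquation

variable {r ρ α : ℝ}

lemma bpa_equation_iff (hρ : 0 < ρ) (hα0 : 0 ≤ α) (hα1 : α ≤ 1) :
    2 * α = 1 - (1 - r) * (1 - α) / (1 - α * (1 - ρ)) + r * α / (1 - (1 - α) * (1 - ρ)) ↔
      2 * (α - r) = (1 - r) * bpaDamped ρ α - r * bpaDamped ρ (1 - α) := by
  have hA := one_sub_bpaDamped hρ hα0 hα1
  have hB := one_sub_bpaDamped (x := 1 - α) hρ (by linarith) (by linarith)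
  rw [sub_sub_cancel] at hB
  rw [mul_div_assoc, mul_div_assoc, ← hA, ← hB]
  constructor <;> intro h <;> linarith

lemma abs_sub_le_of_bpa_equation (hr0 : 0 ≤ r) (hr1 : r ≤ 1) (hρ : 0 < ρ)
    (hα0 : 0 ≤ α) (hα1 : α ≤ 1)
    (heq : 2 * α = 1 - (1 - r) * (1 - α) / (1 - α * (1 - ρ))
      + r * α / (1 - (1 - α) * (1 - ρ))) :
    |α - r| ≤ ρ := by
  have hα0' : 0 ≤ 1 - α := by linarith
  have hα1' : 1 - α ≤ 1 := by linarith
  have key := (bpa_equation_iff hρ hα0 hα1).1 heq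
  have hA0 := bpaDamped_nonneg hρ hα0 hα1
  have hB0 := bpaDamped_nonneg hρ hα0' hα1'
  have hA1 := bpaDamped_le_one hρ hα0 hα1
  have hB1 := bpaDamped_le_one hρ hα0' hα1'
  have hA := one_sub_mul_bpaDamped_le hρ hα0 hα1
  have hB := one_sub_mul_bpaDamped_le hρ hα0' hα1'
  rw [sub_sub_cancel] at hB
  have hr1' : 0 ≤ 1 - r := by linarith
  have hr_le : r ≤ 2 * α := by
    linarith [mul_le_of_le_one_right hr0 hB1, mul_nonneg hr1' hA0]
  have hr_le' : 1 - r ≤ 2 * (1 - α) := by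
    linarith [mul_le_of_le_one_right hr1' hA1, mul_nonneg hr0 hB0]
  rw [abs_le]
  constructor
  · linarith [mul_le_mul_of_nonneg_right hr_le hB0, mul_nonneg hr1' hA0,
      mul_le_of_le_one_left hρ.le hα1']
  · linarith [mul_le_mul_of_nonneg_right hr_le' hA0, mul_nonneg hr0 hB0,
      mul_le_of_le_one_left hρ.le hα1]

end bpaEquation

/-- Fix `r ∈ (0,1/2)` and for each `ρ ∈ (0,1]` let `α* ρ ∈ [0,1]` solve the BPA
fixed-point equation. Then `α* ρ → r` and `α* ρ / (1 − α* ρ) → r/(1−r)` as `ρ → 0⁺`. -/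
theorem stmt_5 (r : ℝ) (hr : 0 < r) (hr1 : r < 1/2) (αs : ℝ → ℝ)
    (hαs : ∀ ρ : ℝ, 0 < ρ → ρ ≤ 1 → αs ρ ∈ Set.Icc (0:ℝ) 1 ∧
      2 * αs ρ = 1 - (1 - r) * (1 - αs ρ) / (1 - αs ρ * (1 - ρ))
        + r * αs ρ / (1 - (1 - αs ρ) * (1 - ρ))) :
    Tendsto αs (𝓝[>] (0:ℝ)) (𝓝 r) ∧
    Tendsto (fun ρ => αs ρ / (1 - αs ρ)) (𝓝[>] (0:ℝ)) (𝓝 (r / (1 - r))) := by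
  have hbound : ∀ᶠ ρ in 𝓝[>] (0:ℝ), ‖αs ρ - r‖ ≤ ρ := by
    filter_upwards [Ioc_mem_nhdsGT one_pos] with ρ ⟨hρ0, hρ1⟩
    obtain ⟨⟨hα0, hα1⟩, heq⟩ := hαs ρ hρ0 hρ1
    exact abs_sub_le_of_bpa_equation hr.le (by linarith) hρ0 hα0 hα1 heq
  have hlim : Tendsto αs (𝓝[>] (0:ℝ)) (𝓝 r) :=
    tendsto_sub_nhds_zero_iff.1 <|
      squeeze_zero_norm' hbound (tendsto_nhdsWithin_of_tendsto_nhds tendsto_id)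
  exact ⟨hlim, hlim.div (tendsto_const_nhds.sub hlim) (by linarith)⟩
end

section
/- Fix r ∈ (0, 1/2) and, for each ρ ∈ (0, 1], let α*(ρ) denote a solution in [0,1] of the BPA fixed-point equation with parameters r and ρ, and set β₂(ρ) = rρ/(2(1−(1−α*(ρ))(1−ρ))) and β₃(ρ) = (1−r)/(2(1−α*(ρ)(1−ρ))). Then β₂(ρ)/β₃(ρ) → 0 as ρ → 0⁺ (the k-hop minority-to-majority gain ratio vanishes in the fully homophilous limit). -/
/-!
The fixed-point equation forces `α ≥ r / 2`: its majority term `(1 - r)(1 - α)/(1 - α(1 - ρ))`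
is at most `1 - r` and its minority term is nonnegative. Hence the denominator
`1 - (1 - α)(1 - ρ) ≥ α` of `β₂` stays bounded away from zero, while `1 - α(1 - ρ) ≤ 1`, so
`β₂ / β₃ = r ρ (1 - α(1 - ρ)) / ((1 - r)(1 - (1 - α)(1 - ρ))) ≤ 2ρ / (1 - r)`.
-/

open Filter Topology Set

namespace BPA

noncomputable section

def IsFixedPoint (r ρ α : ℝ) : Prop :=
  2 * α = 1 - (1 - r) * (1 - α) / (1 - α * (1 - ρ)) + r * α / (1 - (1 - α) * (1 - ρ))

def β₂ (r ρ α : ℝ) : ℝ := r * ρ / (2 * (1 - (1 - α) * (1 - ρ)))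

def β₃ (r ρ α : ℝ) : ℝ := (1 - r) / (2 * (1 - α * (1 - ρ)))

end

variable {r ρ a α : ℝ}

lemma le_one_sub_mul_one_sub (ha : a ≤ 1) (hρ : ρ ≤ 1) : ρ ≤ 1 - a * (1 - ρ) := by
  nlinarith

lemma one_sub_le_one_sub_mul_one_sub (ha : 0 ≤ a) (hρ : 0 ≤ ρ) : 1 - a ≤ 1 - a * (1 - ρ) := by
  nlinarith

lemma one_sub_mul_one_sub_le_one (ha : 0 ≤ a) (hρ : ρ ≤ 1) : 1 - a * (1 - ρ) ≤ 1 := by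
  nlinarith

lemma half_le_of_isFixedPoint (hr : 0 ≤ r) (hr1 : r ≤ 1) (hρ : ρ ∈ Ioc 0 1) (hα : α ∈ Icc 0 1)
    (hfix : IsFixedPoint r ρ α) : r / 2 ≤ α := by
  obtain ⟨hρ0, hρ1⟩ := hρ
  obtain ⟨hα0, hα1⟩ := hα
  have hA : 0 < 1 - α * (1 - ρ) := hρ0.trans_le (le_one_sub_mul_one_sub hα1 hρ1)
  have hB : 0 < 1 - (1 - α) * (1 - ρ) :=
    hρ0.trans_le (le_one_sub_mul_one_sub (by linarith) hρ1)
  have hmajority : (1 - r) * (1 - α) / (1 - α * (1 - ρ)) ≤ 1 - r := by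
    rw [div_le_iff₀ hA]
    exact mul_le_mul_of_nonneg_left (one_sub_le_one_sub_mul_one_sub hα0 hρ0.le) (by linarith)
  have hminority : 0 ≤ r * α / (1 - (1 - α) * (1 - ρ)) := by positivity
  unfold IsFixedPoint at hfix
  linarith

lemma β₂_div_β₃_nonneg (hr : 0 ≤ r) (hr1 : r ≤ 1) (hρ : ρ ∈ Ioc 0 1) (hα : α ∈ Icc 0 1) :
    0 ≤ β₂ r ρ α / β₃ r ρ α := by
  obtain ⟨hρ0, hρ1⟩ := hρ
  have hA := le_one_sub_mul_one_sub hα.2 hρ1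
  have hB := le_one_sub_mul_one_sub (a := 1 - α) (by linarith [hα.1]) hρ1
  unfold β₂ β₃
  exact div_nonneg (div_nonneg (mul_nonneg hr hρ0.le) (by linarith))
    (div_nonneg (by linarith) (by linarith))

lemma β₂_div_β₃_le (hr : 0 < r) (hr1 : r < 1) (hρ : ρ ∈ Ioc 0 1) (hα : α ∈ Icc 0 1)
    (hfix : IsFixedPoint r ρ α) : β₂ r ρ α / β₃ r ρ α ≤ 2 / (1 - r) * ρ := by
  obtain ⟨hρ0, hρ1⟩ := hρ
  have hαr := half_le_of_isFixedPoint hr.le hr1.le ⟨hρ0, hρ1⟩ hα hfix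
  have hB : r / 2 ≤ 1 - (1 - α) * (1 - ρ) := by
    have := one_sub_le_one_sub_mul_one_sub (a := 1 - α) (by linarith [hα.2]) hρ0.le
    linarith
  have hr' : 0 < 1 - r := by linarith
  calc β₂ r ρ α / β₃ r ρ α
      = r * ρ * (1 - α * (1 - ρ)) / ((1 - r) * (1 - (1 - α) * (1 - ρ))) := by
        unfold β₂ β₃
        field_simp
    _ ≤ r * ρ * 1 / ((1 - r) * (r / 2)) := by
        gcongr
        exact one_sub_mul_one_sub_le_one hα.1 hρ1
    _ = 2 / (1 - r) * ρ := by
        field_simp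

end BPA

/-- Fix `r ∈ (0,1/2)` and for each `ρ ∈ (0,1]` let `α* ρ ∈ [0,1]` solve the BPA
fixed-point equation, and set `β₂(ρ) = rρ/(2(1−(1−α*(ρ))(1−ρ)))` and
`β₃(ρ) = (1−r)/(2(1−α*(ρ)(1−ρ)))`. Then `β₂(ρ)/β₃(ρ) → 0` as `ρ → 0⁺`. -/
theorem stmt_6 (r : ℝ) (hr : 0 < r) (hr1 : r < 1/2) (αs : ℝ → ℝ)
    (hαs : ∀ ρ : ℝ, 0 < ρ → ρ ≤ 1 → αs ρ ∈ Set.Icc (0:ℝ) 1 ∧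
      2 * αs ρ = 1 - (1 - r) * (1 - αs ρ) / (1 - αs ρ * (1 - ρ))
        + r * αs ρ / (1 - (1 - αs ρ) * (1 - ρ))) :
    Tendsto (fun ρ =>
        (r * ρ / (2 * (1 - (1 - αs ρ) * (1 - ρ)))) /
        ((1 - r) / (2 * (1 - αs ρ * (1 - ρ)))))
      (𝓝[>] (0:ℝ)) (𝓝 0) := by
  change Tendsto (fun ρ => BPA.β₂ r ρ (αs ρ) / BPA.β₃ r ρ (αs ρ)) (𝓝[>] 0) (𝓝 0)
  have hr1' : r < 1 := by linarith
  have hlinear : Tendsto (fun ρ : ℝ => 2 / (1 - r) * ρ) (𝓝[>] 0) (𝓝 0) := by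
    simpa using ((continuous_const_mul (2 / (1 - r))).tendsto 0).mono_left nhdsWithin_le_nhds
  have hnear : Ioc (0 : ℝ) 1 ∈ 𝓝[>] 0 := Ioc_mem_nhdsGT one_pos
  refine squeeze_zero' ?_ ?_ hlinear
  · filter_upwards [hnear] with ρ hρ
    exact BPA.β₂_div_β₃_nonneg hr.le hr1'.le hρ (hαs ρ hρ.1 hρ.2).1
  · filter_upwards [hnear] with ρ hρ
    exact BPA.β₂_div_β₃_le hr hr1' hρ (hαs ρ hρ.1 hρ.2).1 (hαs ρ hρ.1 hρ.2).2
end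

section
/- Let c₁, c₂ > 0, c₃ ∈ ℝ with c₁ < c₃, m ∈ ℕ, and ε > 0. Let (aₜ)ₜ≥₁, (bₜ)ₜ≥₁, (dₜ)ₜ≥₁ be real sequences with a₁ > 0, bₜ > 0 for all t, satisfying aₜ₊₁ = aₜ + c₁ dₜ aₜ / t + c₂ bₜ for all t ≥ 1, where tᵉ(dₜ − 1) → 0 as t → ∞ and bₜ / ((log t)ᵐ t^{c₃−1}) → 1 as t → ∞. Then aₜ / ((log t)ᵐ t^{c₃}) → c₂/(c₃ − c₁) as t → ∞. -/
open Filter Topology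

/-!
With `G t = (log t)^m t^{c₃}` one has `G t / G (t+1) = 1 - c₃/t + o(1/t)`, so `u t = a t / G t`
satisfies `u (t+1) = α t * u t + β t` with `t (1 - α t) → c₃ - c₁ > 0` and `t β t → c₂`.
For such a recursion the excess of `|u t - c₂/(c₃ - c₁)|` over any margin shrinks by a factor
`1 - κ/t` per step, and `∏ (1 - κ/t) → 0` because the harmonic series diverges.
-/

theorem tendsto_sum_Ico_one_div_atTop (T : ℕ) :
    Tendsto (fun t : ℕ => ∑ s ∈ Finset.Ico T t, (1 : ℝ) / s) atTop atTop := by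
  have h := (not_summable_iff_tendsto_nat_atTop_of_nonneg (fun n => by positivity)).1
    Real.not_summable_one_div_natCast
  refine (tendsto_atTop_add_const_right atTop (-∑ s ∈ Finset.range T, (1 : ℝ) / s) h).congr' ?_
  filter_upwards [eventually_ge_atTop T] with t ht
  rw [Finset.sum_Ico_eq_sub _ ht, sub_eq_add_neg]

theorem tendsto_zero_of_le_one_sub_div_mul {κ : ℝ} (hκ : 0 < κ) {v : ℕ → ℝ}
    (hv : ∀ᶠ t in atTop, 0 ≤ v t) (hrec : ∀ᶠ t : ℕ in atTop, v (t + 1) ≤ (1 - κ / t) * v t) :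
    Tendsto v atTop (𝓝 0) := by
  obtain ⟨T, hT⟩ := eventually_atTop.mp (hv.and hrec)
  have bound : ∀ t, T ≤ t → v t ≤ v T * Real.exp (-(κ * ∑ s ∈ Finset.Ico T t, (1 : ℝ) / s)) := by
    intro t ht
    induction t, ht using Nat.le_induction with
    | base => simp
    | succ t ht ih =>
      obtain ⟨hvt, hstep⟩ := hT t ht
      calc v (t + 1) ≤ (1 - κ / t) * v t := hstep
        _ ≤ Real.exp (-(κ / t)) * v t := by gcongr; linarith [Real.add_one_le_exp (-(κ / t))]
        _ ≤ Real.exp (-(κ / t)) * (v T * Real.exp (-(κ * ∑ s ∈ Finset.Ico T t, (1 : ℝ) / s))) := by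
          gcongr
        _ = v T * Real.exp (-(κ * ∑ s ∈ Finset.Ico T (t + 1), (1 : ℝ) / s)) := by
          rw [Finset.sum_Ico_succ_top ht, mul_add, mul_one_div, neg_add, Real.exp_add]
          ring
  have hlim : Tendsto (fun t => v T * Real.exp (-(κ * ∑ s ∈ Finset.Ico T t, (1 : ℝ) / s)))
      atTop (𝓝 0) := by
    simpa using (Real.tendsto_exp_atBot.comp (tendsto_neg_atTop_atBot.comp
      ((tendsto_sum_Ico_one_div_atTop T).const_mul_atTop hκ))).const_mul (v T)
  exact tendsto_of_tendsto_of_tendsto_of_le_of_le' tendsto_const_nhds hlim hv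
    (eventually_atTop.2 ⟨T, bound⟩)

theorem max_abs_mul_add_sub_le {α β q M : ℝ} (x : ℝ) (hα : 0 ≤ α) (hαq : α ≤ q)
    (hβ : |β| ≤ (1 - α) * M) : max (|α * x + β| - M) 0 ≤ q * max (|x| - M) 0 := by
  have hx : |x| - M ≤ max (|x| - M) 0 := le_max_left _ _
  refine max_le ?_ (mul_nonneg (hα.trans hαq) (le_max_right _ _))
  calc |α * x + β| - M ≤ α * |x| + |β| - M := by
        have h := abs_add_le (α * x) β
        rw [abs_mul, abs_of_nonneg hα] at h
        linarith
    _ ≤ α * max (|x| - M) 0 := by nlinarith [mul_le_mul_of_nonneg_left hx hα]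
    _ ≤ q * max (|x| - M) 0 := by gcongr

theorem tendsto_zero_of_eventually_eq_mul_add {α β u : ℕ → ℝ} {g : ℝ} (hg : 0 < g)
    (hα : Tendsto (fun t : ℕ => t * (1 - α t)) atTop (𝓝 g))
    (hβ : Tendsto (fun t : ℕ => t * β t) atTop (𝓝 0))
    (hu : ∀ᶠ t in atTop, u (t + 1) = α t * u t + β t) :
    Tendsto u atTop (𝓝 0) := by
  rw [Metric.tendsto_nhds]
  intro δ hδ
  set κ := g / 2
  set M := δ / 2 with hM_def
  have hκ : 0 < κ := half_pos hg
  have hM : 0 < M := half_pos hδ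
  have hα_ge : ∀ᶠ t : ℕ in atTop, κ ≤ t * (1 - α t) :=
    hα.eventually (eventually_ge_nhds (half_lt_self hg))
  have hα_le : ∀ᶠ t : ℕ in atTop, t * (1 - α t) ≤ t :=
    ((hα.eventually (eventually_le_nhds (lt_add_one g))).and
      (tendsto_natCast_atTop_atTop.eventually_ge_atTop (g + 1))).mono fun t h => h.1.trans h.2
  have hβ_le : ∀ᶠ t : ℕ in atTop, |t * β t| ≤ κ * M :=
    hβ.abs.eventually (eventually_le_nhds (by simpa using mul_pos hκ hM))
  set v : ℕ → ℝ := fun t => max (|u t| - M) 0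
  have hv : ∀ᶠ t : ℕ in atTop, v (t + 1) ≤ (1 - κ / t) * v t := by
    filter_upwards [hu, hα_ge, hα_le, hβ_le, eventually_gt_atTop 0] with t hut h₁ h₂ h₃ ht
    have ht' : (0 : ℝ) < t := by exact_mod_cast ht
    have hαle : α t ≤ 1 - κ / t := by
      rw [le_sub_comm, div_le_iff₀ ht']; linarith
    have hα0 : 0 ≤ α t := by nlinarith
    have hβ' : |β t| ≤ (1 - α t) * M := by
      rw [abs_mul, abs_of_pos ht'] at h₃
      calc |β t| ≤ κ / t * M := by rw [div_mul_eq_mul_div, le_div_iff₀ ht']; linarith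
        _ ≤ (1 - α t) * M := by gcongr; linarith
    simpa only [v, hut] using max_abs_mul_add_sub_le (u t) hα0 hαle hβ'
  have hv0 := tendsto_zero_of_le_one_sub_div_mul (v := v) hκ
    (Eventually.of_forall fun t => le_max_right _ _) hv
  filter_upwards [hv0.eventually (eventually_lt_nhds hM)] with t ht
  have hut : |u t| - M ≤ v t := le_max_left _ _
  rw [Real.dist_0_eq_abs]
  linarith

theorem tendsto_of_eventually_eq_mul_add {α β u : ℕ → ℝ} {g s : ℝ} (hg : 0 < g)
    (hα : Tendsto (fun t : ℕ => t * (1 - α t)) atTop (𝓝 g))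
    (hβ : Tendsto (fun t : ℕ => t * β t) atTop (𝓝 s))
    (hu : ∀ᶠ t in atTop, u (t + 1) = α t * u t + β t) :
    Tendsto u atTop (𝓝 (s / g)) := by
  have hβ' : Tendsto (fun t : ℕ => t * (β t - (1 - α t) * (s / g))) atTop (𝓝 0) := by
    have h := hβ.sub (hα.mul_const (s / g))
    rw [mul_div_cancel₀ s hg.ne', sub_self] at h
    exact h.congr fun t => by ring
  have hw := tendsto_zero_of_eventually_eq_mul_add (u := fun t => u t - s / g) hg hα hβ'
    (hu.mono fun t ht => by rw [ht]; ring)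
  simpa using hw.add_const (s / g)

theorem HasDerivAt.tendsto_mul_sub_comp {ι : Type*} {l : Filter ι} {f : ℝ → ℝ} {f' x L : ℝ}
    {y r : ι → ℝ} (hf : HasDerivAt f f' x) (hy : Tendsto y l (𝓝[≠] x))
    (hr : Tendsto (fun i => r i * (x - y i)) l (𝓝 L)) :
    Tendsto (fun i => r i * (f x - f (y i))) l (𝓝 (f' * L)) := by
  refine (((hasDerivAt_iff_tendsto_slope.1 hf).comp hy).mul hr).congr' ?_
  filter_upwards [hy self_mem_nhdsWithin] with i (hi : y i ≠ x)
  rw [Function.comp_apply, slope_def_field]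
  field_simp [sub_ne_zero.2 hi]
  ring

theorem tendsto_one_of_tendsto_natCast_mul_one_sub {y : ℕ → ℝ} {L : ℝ}
    (h : Tendsto (fun t : ℕ => (t : ℝ) * (1 - y t)) atTop (𝓝 L)) : Tendsto y atTop (𝓝 1) := by
  have h0 : Tendsto (fun t : ℕ => 1 - y t) atTop (𝓝 0) := by
    refine (h.div_atTop tendsto_natCast_atTop_atTop).congr' ?_
    filter_upwards [eventually_gt_atTop 0] with t ht
    field_simp
  simpa using (tendsto_const_nhds (x := (1 : ℝ))).sub h0

theorem tendsto_zero_of_tendsto_rpow_mul {ε : ℝ} (hε : 0 < ε) {x : ℕ → ℝ}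
    (hx : Tendsto (fun t : ℕ => (t : ℝ) ^ ε * x t) atTop (𝓝 0)) : Tendsto x atTop (𝓝 0) := by
  have h := hx.mul ((tendsto_rpow_neg_atTop hε).comp tendsto_natCast_atTop_atTop)
  rw [zero_mul] at h
  refine h.congr' ?_
  filter_upwards [eventually_gt_atTop 0] with t ht
  have : (0 : ℝ) < (t : ℝ) ^ ε := by positivity
  rw [Function.comp_apply, Real.rpow_neg (Nat.cast_nonneg t)]
  field_simp

theorem tendsto_natCast_mul_one_sub_div_add_one_rpow (c : ℝ) :
    Tendsto (fun t : ℕ => (t : ℝ) * (1 - ((t : ℝ) / (t + 1)) ^ c)) atTop (𝓝 c) := by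
  have hr : Tendsto (fun t : ℕ => (t : ℝ) * (1 - t / (t + 1))) atTop (𝓝 1) :=
    (tendsto_natCast_div_add_atTop (1 : ℝ)).congr fun t => by field_simp; ring
  have hy : Tendsto (fun t : ℕ => (t : ℝ) / (t + 1)) atTop (𝓝[≠] 1) :=
    tendsto_nhdsWithin_iff.2 ⟨tendsto_one_of_tendsto_natCast_mul_one_sub hr,
      Eventually.of_forall fun t => by simp [div_eq_one_iff_eq (by positivity : (t : ℝ) + 1 ≠ 0)]⟩
  simpa using (Real.hasDerivAt_rpow_const (x := 1) (p := c) (Or.inl one_ne_zero)).tendsto_mul_sub_comp hy hr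

theorem tendsto_natCast_mul_one_sub_log_div_log_add_one_pow (m : ℕ) :
    Tendsto (fun t : ℕ => (t : ℝ) * (1 - (Real.log t / Real.log (t + 1)) ^ m)) atTop (𝓝 0) := by
  have hlog : Tendsto (fun t : ℕ => (Real.log ((t : ℝ) + 1))⁻¹) atTop (𝓝 0) :=
    (Real.tendsto_log_atTop.comp (tendsto_atTop_add_const_right atTop 1
      tendsto_natCast_atTop_atTop)).inv_tendsto_atTop
  have hr : Tendsto (fun t : ℕ => (t : ℝ) * (1 - Real.log t / Real.log (t + 1))) atTop (𝓝 0) := by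
    have h := ((Real.tendsto_mul_log_one_add_div_atTop 1).comp tendsto_natCast_atTop_atTop).mul hlog
    rw [mul_zero] at h
    refine h.congr' ?_
    filter_upwards [eventually_gt_atTop 0] with t ht
    have ht' : (0 : ℝ) < t := by exact_mod_cast ht
    have hlog_pos : 0 < Real.log ((t : ℝ) + 1) := Real.log_pos (by linarith)
    rw [Function.comp_apply, one_add_div ht'.ne', Real.log_div (by positivity) ht'.ne']
    field_simp
  have hy : Tendsto (fun t : ℕ => Real.log t / Real.log (t + 1)) atTop (𝓝[≠] 1) := by
    refine tendsto_nhdsWithin_iff.2 ⟨tendsto_one_of_tendsto_natCast_mul_one_sub hr, ?_⟩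
    filter_upwards [eventually_gt_atTop 0] with t ht
    have ht' : (0 : ℝ) < t := by exact_mod_cast ht
    have hlt : Real.log t < Real.log (t + 1) := Real.log_lt_log ht' (by linarith)
    exact (div_lt_one (Real.log_pos (by linarith))).2 hlt |>.ne
  simpa using (hasDerivAt_pow m (1 : ℝ)).tendsto_mul_sub_comp hy hr

theorem tendsto_natCast_mul_one_sub_log_pow_mul_rpow_div (m : ℕ) (c : ℝ) :
    Tendsto (fun t : ℕ => (t : ℝ) *
      (1 - Real.log t ^ m * (t : ℝ) ^ c / (Real.log (t + 1) ^ m * ((t : ℝ) + 1) ^ c)))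
      atTop (𝓝 c) := by
  have hφ := tendsto_natCast_mul_one_sub_div_add_one_rpow c
  have hψ := tendsto_natCast_mul_one_sub_log_div_log_add_one_pow m
  have h := hφ.add ((tendsto_one_of_tendsto_natCast_mul_one_sub hφ).mul hψ)
  rw [one_mul, add_zero] at h
  refine h.congr fun t => ?_
  rw [mul_comm (Real.log t ^ m), mul_comm (Real.log (t + 1) ^ m), ← div_mul_div_comm, ← div_pow,
    ← Real.div_rpow (Nat.cast_nonneg t) (by positivity)]
  ring

theorem stmt_8_general (c₁ c₂ c₃ : ℝ) (hc : c₁ < c₃)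
    (m : ℕ) (ε : ℝ) (hε : 0 < ε) (a b d : ℕ → ℝ)
    (hrec : ∀ t : ℕ, 1 ≤ t → a (t + 1) = a t + c₁ * d t * a t / t + c₂ * b t)
    (hd : Tendsto (fun t : ℕ => (t : ℝ) ^ ε * (d t - 1)) atTop (𝓝 0))
    (hbas : Tendsto (fun t : ℕ => b t / ((Real.log t) ^ m * (t : ℝ) ^ (c₃ - 1)))
      atTop (𝓝 1)) :
    Tendsto (fun t : ℕ => a t / ((Real.log t) ^ m * (t : ℝ) ^ c₃))
      atTop (𝓝 (c₂ / (c₃ - c₁))) := by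
  set r : ℕ → ℝ := fun t => Real.log t ^ m * (t : ℝ) ^ c₃ /
    (Real.log (t + 1) ^ m * ((t : ℝ) + 1) ^ c₃)
  have hr : Tendsto (fun t : ℕ => (t : ℝ) * (1 - r t)) atTop (𝓝 c₃) :=
    tendsto_natCast_mul_one_sub_log_pow_mul_rpow_div m c₃
  have hr1 : Tendsto r atTop (𝓝 1) := tendsto_one_of_tendsto_natCast_mul_one_sub hr
  have hd1 : Tendsto d atTop (𝓝 1) := by
    simpa using (tendsto_zero_of_tendsto_rpow_mul hε hd).add_const 1
  have hlog : ∀ᶠ t : ℕ in atTop, 1 < (t : ℝ) ∧ 0 < Real.log t ∧ 0 < Real.log ((t : ℝ) + 1) := by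
    filter_upwards [eventually_gt_atTop 1] with t ht
    have ht' : (1 : ℝ) < t := by exact_mod_cast ht
    exact ⟨ht', Real.log_pos ht', Real.log_pos (by linarith)⟩
  refine tendsto_of_eventually_eq_mul_add (α := fun t => r t * (1 + c₁ * d t / t))
    (β := fun t => c₂ * b t / (Real.log (t + 1) ^ m * ((t : ℝ) + 1) ^ c₃)) (sub_pos.2 hc) ?_ ?_ ?_
  · have h := hr.sub ((hd1.const_mul c₁).mul hr1)
    rw [mul_one, mul_one] at h
    refine h.congr' ?_
    filter_upwards [hlog] with t ⟨ht, _⟩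
    field_simp
    ring
  · have h := (hbas.const_mul c₂).mul hr1
    rw [mul_one, mul_one] at h
    refine h.congr' ?_
    filter_upwards [hlog] with t ⟨ht, _, _⟩
    simp only [r]
    rw [Real.rpow_sub_one (by positivity)]
    field_simp
  · filter_upwards [hlog] with t ⟨ht, _, _⟩
    simp only [r]
    rw [hrec t (Nat.one_le_cast.1 ht.le)]
    push_cast
    field_simp

/-- Recursion asymptotics, case `c₁ < c₃`: if `aₜ₊₁ = aₜ + c₁ dₜ aₜ/t + c₂ bₜ`
with `dₜ = 1 + o(t^{−ε})` and `bₜ = (log t)ᵐ t^{c₃−1}(1+o(1))`, then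
`aₜ = (c₂/(c₃−c₁)) (log t)ᵐ t^{c₃} (1+o(1))`. -/
theorem stmt_8 (c₁ c₂ c₃ : ℝ) (hc₁ : 0 < c₁) (hc₂ : 0 < c₂) (hc : c₁ < c₃)
    (m : ℕ) (ε : ℝ) (hε : 0 < ε) (a b d : ℕ → ℝ)
    (ha1 : 0 < a 1) (hb : ∀ t : ℕ, 1 ≤ t → 0 < b t)
    (hrec : ∀ t : ℕ, 1 ≤ t → a (t + 1) = a t + c₁ * d t * a t / t + c₂ * b t)
    (hd : Tendsto (fun t : ℕ => (t : ℝ) ^ ε * (d t - 1)) atTop (𝓝 0))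
    (hbas : Tendsto (fun t : ℕ => b t / ((Real.log t) ^ m * (t : ℝ) ^ (c₃ - 1)))
      atTop (𝓝 1)) :
    Tendsto (fun t : ℕ => a t / ((Real.log t) ^ m * (t : ℝ) ^ c₃))
      atTop (𝓝 (c₂ / (c₃ - c₁))) :=
  stmt_8_general c₁ c₂ c₃ hc m ε hε a b d hrec hd hbas
end

section
/- Let c₁ = c₃ = c with c₁, c₂ > 0, m ∈ ℕ, and ε > 0. Let (aₜ)ₜ≥₁, (bₜ)ₜ≥₁, (dₜ)ₜ≥₁ be real sequences with a₁ > 0, bₜ > 0 for all t, satisfying aₜ₊₁ = aₜ + c₁ dₜ aₜ / t + c₂ bₜ for all t ≥ 1, where tᵉ(dₜ − 1) → 0 as t → ∞ and bₜ / ((log t)ᵐ t^{c−1}) → 1 as t → ∞. Then there exists a constant C > 0 such that aₜ / ((log t)^{m+1} t^{c}) → C as t → ∞. -/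
/-!
The recursion is linear: with the integrating factor `P t = ∏_{N ≤ s < t} (1 + c dₛ / s)`,
`a t = P t (a N + ∑_{N ≤ s < t} c₂ bₛ / P (s + 1))`. Since `c dₛ / s - c / s` is absolutely
summable, `P t ~ K t^c` for some `K > 0`, so the summands are
`~ (c₂ / K) (log s)^m / s ~ (c₂ / (K (m + 1))) ((log (s + 1))^(m + 1) - (log s)^(m + 1))`.
Equivalent nonnegative divergent series have equivalent partial sums, and the right-hand side
telescopes, so the sum is `~ (c₂ / (K (m + 1))) (log t)^(m + 1)` and
`a t ~ c₂ / (m + 1) · (log t)^(m + 1) t^c`.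
-/

open Filter Topology Finset Asymptotics

theorem Real.isBigO_log_one_add_sub_self :
    (fun x : ℝ => Real.log (1 + x) - x) =O[𝓝 0] fun x => x ^ 2 := by
  have h := (Complex.log_sub_self_isBigO.comp_tendsto
    (Complex.continuous_ofReal.tendsto' 0 0 Complex.ofReal_zero)).norm_norm
  refine isBigO_norm_norm.mp (h.congr' ?_ (by simp))
  filter_upwards [Ioi_mem_nhds (neg_one_lt_zero : (-1 : ℝ) < 0)] with x hx
  rw [Function.comp_apply, ← Complex.ofReal_one, ← Complex.ofReal_add,
    ← Complex.ofReal_log (by linarith [show (-1 : ℝ) < x from hx]), ← Complex.ofReal_sub,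
    Complex.norm_real]

theorem summable_log_one_add_sub_self {y : ℕ → ℝ} (hy : Tendsto y atTop (𝓝 0))
    (hy2 : Summable fun s => y s ^ 2) : Summable fun s => Real.log (1 + y s) - y s :=
  summable_of_isBigO_nat hy2 (Real.isBigO_log_one_add_sub_self.comp_tendsto hy)

theorem sum_Ico_log_one_add_inv {N t : ℕ} (hN : 0 < N) (ht : N ≤ t) :
    ∑ s ∈ Ico N t, Real.log (1 + (s : ℝ)⁻¹) = Real.log t - Real.log N := by
  rw [← sum_Ico_sub (fun s : ℕ => Real.log s) ht]
  refine sum_congr rfl fun s hs => ?_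
  have hs : (0 : ℝ) < s := by exact_mod_cast hN.trans_le (mem_Ico.1 hs).1
  rw [← Real.log_div (by positivity) hs.ne', Nat.cast_succ, add_div, div_self hs.ne', one_div]

theorem summable_log_one_add_sub_mul_log_one_add_inv {c : ℝ} {x : ℕ → ℝ}
    (hxO : x =O[atTop] fun s => (s : ℝ)⁻¹) (hsum : Summable fun s => x s - c / s) :
    Summable fun s : ℕ => Real.log (1 + x s) - c * Real.log (1 + (s : ℝ)⁻¹) := by
  have hinv : Tendsto (fun s : ℕ => (s : ℝ)⁻¹) atTop (𝓝 0) := tendsto_inv_atTop_nhds_zero_nat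
  have hinv2 : Summable fun s : ℕ => ((s : ℝ)⁻¹) ^ 2 := by
    simpa only [inv_pow] using Real.summable_nat_pow_inv.2 one_lt_two
  have hx := summable_log_one_add_sub_self (hxO.trans_tendsto hinv)
    (summable_of_isBigO_nat hinv2 (hxO.pow 2))
  have hharm := summable_log_one_add_sub_self hinv hinv2
  refine ((hx.add hsum).sub (hharm.mul_left c)).congr fun s => ?_
  ring

theorem exists_pos_isEquivalent_prod_one_add {c : ℝ} {x : ℕ → ℝ} {N : ℕ} (hN : 0 < N)
    (hx : ∀ s, N ≤ s → 0 < 1 + x s) (hxO : x =O[atTop] fun s => (s : ℝ)⁻¹)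
    (hsum : Summable fun s => x s - c / s) :
    ∃ K, 0 < K ∧ (fun t => ∏ s ∈ Ico N t, (1 + x s)) ~[atTop] fun t => K * (t : ℝ) ^ c := by
  set e : ℕ → ℝ := fun s => Real.log (1 + x s) - c * Real.log (1 + (s : ℝ)⁻¹)
  have he : Summable e := summable_log_one_add_sub_mul_log_one_add_inv hxO hsum
  have hlog : ∀ t, N ≤ t → Real.log (∏ s ∈ Ico N t, (1 + x s)) - c * Real.log t
      = ∑ s ∈ Ico N t, e s - c * Real.log N := by
    intro t ht
    rw [Real.log_prod fun s hs => (hx s (mem_Ico.1 hs).1).ne', sum_sub_distrib, ← mul_sum,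
      sum_Ico_log_one_add_inv hN ht]
    ring
  set L := ∑' s, e s - ∑ s ∈ range N, e s - c * Real.log N
  have hL : Tendsto (fun t : ℕ => Real.log (∏ s ∈ Ico N t, (1 + x s)) - c * Real.log t)
      atTop (𝓝 L) := by
    refine ((he.hasSum.tendsto_sum_nat.sub_const _).sub_const _).congr' ?_
    filter_upwards [eventually_ge_atTop N] with t ht
    rw [hlog t ht, sum_Ico_eq_sub _ ht]
  refine ⟨Real.exp L, Real.exp_pos L, isEquivalent_of_tendsto_one ?_⟩
  refine (Real.tendsto_exp_nhds_zero_nhds_one.comp (tendsto_sub_nhds_zero_iff.2 hL)).congr' ?_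
  filter_upwards [eventually_ge_atTop N] with t ht
  have hP : 0 < ∏ s ∈ Ico N t, (1 + x s) := prod_pos fun s hs => hx s (mem_Ico.1 hs).1
  have ht : (0 : ℝ) < t := by exact_mod_cast hN.trans_le ht
  simp only [Function.comp_apply, Pi.div_apply]
  rw [Real.exp_sub, Real.exp_sub, Real.exp_log hP, Real.rpow_def_of_pos ht, mul_comm c]
  field_simp

theorem Asymptotics.IsEquivalent.prod_Ico_succ {x v : ℕ → ℝ} {N : ℕ}
    (h : (fun t => ∏ s ∈ Ico N t, (1 + x s)) ~[atTop] v) (hx : Tendsto x atTop (𝓝 0)) :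
    (fun t => ∏ s ∈ Ico N (t + 1), (1 + x s)) ~[atTop] v := by
  have h1 : (fun s => 1 + x s) ~[atTop] fun _ => (1 : ℝ) :=
    (isEquivalent_const_iff_tendsto one_ne_zero).2 (by simpa using hx.const_add 1)
  refine ((h.mul h1).congr_left ?_).congr_right (.of_forall fun s => mul_one _)
  filter_upwards [eventually_ge_atTop N] with t ht
  exact (prod_Ico_succ_top ht _).symm

theorem eq_prod_mul_add_sum_div_prod {K : Type*} [Field K] {a p q : ℕ → K} {N : ℕ}
    (hp : ∀ s, N ≤ s → p s ≠ 0) (hrec : ∀ t, N ≤ t → a (t + 1) = p t * a t + q t)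
    {t : ℕ} (ht : N ≤ t) :
    a t = (∏ s ∈ Ico N t, p s) * (a N + ∑ s ∈ Ico N t, q s / ∏ r ∈ Ico N (s + 1), p r) := by
  induction t, ht using Nat.le_induction with
  | base => simp
  | succ t ht ih =>
    have hP : ∏ r ∈ Ico N (t + 1), p r ≠ 0 :=
      prod_ne_zero_iff.2 fun r hr => hp r (mem_Ico.1 hr).1
    rw [hrec t ht, ih, sum_Ico_succ_top ht, ← add_assoc, mul_add _ _ (q t / _),
      mul_div_cancel₀ _ hP, prod_Ico_succ_top ht]
    ring

theorem tendsto_log_natCast_pow_atTop {n : ℕ} (hn : n ≠ 0) :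
    Tendsto (fun t : ℕ => Real.log t ^ n) atTop atTop :=
  (tendsto_pow_atTop hn).comp (Real.tendsto_log_atTop.comp tendsto_natCast_atTop_atTop)

theorem isEquivalent_log_succ_pow_sub_log_pow (m : ℕ) :
    (fun s : ℕ => Real.log (s + 1) ^ (m + 1) - Real.log s ^ (m + 1)) ~[atTop]
      fun s => (m + 1) * (Real.log s ^ m / s) := by
  have hlog : Tendsto (fun s : ℕ => Real.log s) atTop atTop :=
    Real.tendsto_log_atTop.comp tendsto_natCast_atTop_atTop
  have hstep : Tendsto (fun s : ℕ => (s : ℝ) * (Real.log (s + 1) - Real.log s)) atTop (𝓝 1) := by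
    refine ((Real.tendsto_mul_log_one_add_div_atTop 1).comp tendsto_natCast_atTop_atTop).congr' ?_
    filter_upwards [eventually_gt_atTop 0] with s hs
    have hs : (0 : ℝ) < s := by exact_mod_cast hs
    rw [Function.comp_apply, ← Real.log_div (by positivity) hs.ne', add_div, div_self hs.ne',
      add_comm]
  have hratio : Tendsto (fun s : ℕ => Real.log (s + 1) / Real.log s) atTop (𝓝 1) := by
    have h := (tendsto_const_nhds (x := (1 : ℝ))).add
      ((hstep.mul tendsto_inv_atTop_nhds_zero_nat).div_atTop hlog)
    rw [add_zero] at h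
    refine h.congr' ?_
    filter_upwards [eventually_gt_atTop 0, hlog.eventually_gt_atTop 0] with s hs hL
    have hs : (0 : ℝ) < s := by exact_mod_cast hs
    field_simp
    ring
  have hgeom : Tendsto (fun s : ℕ => ∑ i ∈ range (m + 1), (Real.log (s + 1) / Real.log s) ^ i)
      atTop (𝓝 (m + 1)) := by
    simpa using tendsto_finsetSum (range (m + 1)) fun i _ => hratio.pow i
  refine isEquivalent_of_tendsto_one ?_
  have h := (hgeom.mul hstep).div_const ((m : ℝ) + 1)
  rw [mul_one, div_self (by positivity)] at h
  refine h.congr' ?_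
  filter_upwards [eventually_gt_atTop 0, hlog.eventually_gt_atTop 0] with s hs hL
  have hs : (0 : ℝ) < s := by exact_mod_cast hs
  obtain ⟨r, hr⟩ : ∃ r, Real.log (s + 1) = r * Real.log s :=
    ⟨_, (div_mul_cancel₀ _ hL.ne').symm⟩
  have hg := geom_sum_mul r (m + 1)
  simp only [Pi.div_apply]
  rw [hr, mul_div_cancel_right₀ _ hL.ne']
  field_simp
  linear_combination Real.log s ^ (m + 1) * hg

theorem Asymptotics.IsEquivalent.sum_Ico {f g : ℕ → ℝ} (h : f ~[atTop] g) (hg : 0 ≤ g) (N : ℕ)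
    (hG : Tendsto (fun n => ∑ i ∈ Ico N n, g i) atTop atTop) :
    (fun n => ∑ i ∈ Ico N n, f i) ~[atTop] fun n => ∑ i ∈ Ico N n, g i := by
  have hGnorm : Tendsto (norm ∘ fun n => ∑ i ∈ Ico N n, g i) atTop atTop :=
    tendsto_norm_atTop_atTop.comp hG
  have hsplit : ∀ u : ℕ → ℝ, (fun n => ∑ i ∈ range n, u i) =ᶠ[atTop]
      fun n => ∑ i ∈ range N, u i + ∑ i ∈ Ico N n, u i := fun u => by
    filter_upwards [eventually_ge_atTop N] with n hn
    rw [sum_range_add_sum_Ico _ hn]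
  have hrange : (fun n => ∑ i ∈ range n, g i) ~[atTop] fun n => ∑ i ∈ Ico N n, g i :=
    (IsEquivalent.refl.const_add_of_norm_tendsto_atTop hGnorm).congr_left
      (hsplit g).symm
  have hdiff := ((h.isLittleO.sum_range hg
    (hrange.symm.tendsto_atTop hG)).trans_isEquivalent hrange).sub
    (isLittleO_const_left.2 (Or.inr hGnorm) : (fun _ => ∑ i ∈ range N, (f - g) i) =o[atTop] _)
  refine IsLittleO.isEquivalent (hdiff.congr' ?_ EventuallyEq.rfl)
  filter_upwards [hsplit (f - g)] with n hn
  rw [hn, add_sub_cancel_left]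
  simp [sum_sub_distrib]

theorem isEquivalent_sum_Ico_of_isEquivalent_log_pow_div {f : ℕ → ℝ} {κ : ℝ} (hκ : 0 < κ)
    (N m : ℕ) (hf : f ~[atTop] fun s => κ * (Real.log s ^ m / s)) :
    (fun t => ∑ s ∈ Ico N t, f s) ~[atTop] fun t => κ * (Real.log t ^ (m + 1) / (m + 1)) := by
  set g : ℕ → ℝ := fun s => κ / (m + 1) * (Real.log (s + 1) ^ (m + 1) - Real.log s ^ (m + 1))
  have hfg : f ~[atTop] g := by
    refine hf.trans (((IsEquivalent.refl (u := fun _ => κ / (m + 1))).mul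
      (isEquivalent_log_succ_pow_sub_log_pow m).symm).congr_left (.of_eq ?_))
    ext s
    simp only [Pi.mul_apply]
    field_simp
  have hg : 0 ≤ g := fun s => by
    have hmono : Real.log s ≤ Real.log (s + 1) := by
      rcases s.eq_zero_or_pos with rfl | hs
      · simp
      · exact Real.log_le_log (by exact_mod_cast hs) (by linarith)
    exact mul_nonneg (by positivity)
      (sub_nonneg.2 (pow_le_pow_left₀ (Real.log_natCast_nonneg s) hmono _))
  have hlog : Tendsto (fun t : ℕ => κ / (m + 1) * Real.log t ^ (m + 1)) atTop atTop :=
    (tendsto_log_natCast_pow_atTop m.succ_ne_zero).const_mul_atTop (by positivity)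
  have hG : (fun t => ∑ s ∈ Ico N t, g s) =ᶠ[atTop]
      fun t => -(κ / (m + 1) * Real.log N ^ (m + 1)) + κ / (m + 1) * Real.log t ^ (m + 1) := by
    filter_upwards [eventually_ge_atTop N] with t ht
    have h := sum_Ico_sub (fun s : ℕ => Real.log s ^ (m + 1)) ht
    push_cast at h
    rw [← mul_sum, h]
    ring
  have hGequiv : (fun t => ∑ s ∈ Ico N t, g s) ~[atTop]
      fun t => κ / (m + 1) * Real.log t ^ (m + 1) :=
    (IsEquivalent.refl.const_add_of_norm_tendsto_atTop
      (tendsto_norm_atTop_atTop.comp hlog)).congr_left hG.symm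
  refine ((hfg.sum_Ico hg N (hGequiv.symm.tendsto_atTop hlog)).trans hGequiv).congr_right
    (.of_eq ?_)
  ext t
  ring

theorem Asymptotics.IsEquivalent.tendsto_div_of_const_mul {α : Type*} {l : Filter α}
    {u v : α → ℝ} {C : ℝ} (h : u ~[l] fun x => C * v x) (hv : ∀ᶠ x in l, v x ≠ 0) :
    Tendsto (fun x => u x / v x) l (𝓝 C) :=
  ((h.div IsEquivalent.refl).congr_right (hv.mono fun x hx => by
    simp [mul_div_assoc, div_self hx])).tendsto_const

theorem isBigO_rpow_neg_of_isBigO_rpow_mul {u : ℕ → ℝ} {ε : ℝ}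
    (h : (fun t : ℕ => (t : ℝ) ^ ε * u t) =O[atTop] fun _ => (1 : ℝ)) :
    u =O[atTop] fun t : ℕ => (t : ℝ) ^ (-ε) := by
  refine ((isBigO_refl (fun t : ℕ => (t : ℝ) ^ (-ε)) atTop).mul h).congr' ?_
    (.of_forall fun t => mul_one _)
  filter_upwards [eventually_gt_atTop 0] with t ht
  rw [← mul_assoc, ← Real.rpow_add (by exact_mod_cast ht), neg_add_cancel, Real.rpow_zero,
    one_mul]

theorem summable_div_natCast_of_isBigO_rpow_neg {u : ℕ → ℝ} {ε : ℝ} (hε : 0 < ε)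
    (hu : u =O[atTop] fun t : ℕ => (t : ℝ) ^ (-ε)) : Summable fun s : ℕ => u s / s := by
  refine summable_of_isBigO_nat (Real.summable_nat_rpow.2 (by linarith : -ε - 1 < -1))
    ((hu.mul (isBigO_refl (fun s : ℕ => (s : ℝ)⁻¹) atTop)).congr' (.of_forall fun s => ?_) ?_)
  · exact (div_eq_mul_inv _ _).symm
  · filter_upwards [eventually_gt_atTop 0] with s hs
    rw [Real.rpow_sub_one (by exact_mod_cast hs.ne'), div_eq_mul_inv]

theorem tendsto_div_log_pow_mul_rpow_of_recurrence {a x q : ℕ → ℝ} {c κ : ℝ} {m : ℕ}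
    (hκ : 0 < κ) (hxO : x =O[atTop] fun s => (s : ℝ)⁻¹) (hsum : Summable fun s => x s - c / s)
    (hrec : ∀ᶠ t in atTop, a (t + 1) = (1 + x t) * a t + q t)
    (hq : q ~[atTop] fun s => κ * (Real.log s ^ m * (s : ℝ) ^ (c - 1))) :
    Tendsto (fun t => a t / (Real.log t ^ (m + 1) * (t : ℝ) ^ c)) atTop (𝓝 (κ / (m + 1))) := by
  have hx0 : Tendsto x atTop (𝓝 0) := hxO.trans_tendsto tendsto_inv_atTop_nhds_zero_nat
  obtain ⟨N, hN⟩ := eventually_atTop.1 (((hx0.eventually (eventually_gt_nhds neg_one_lt_zero)).and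
    hrec).and (eventually_ge_atTop 1))
  obtain ⟨K, hK, hPK⟩ := exists_pos_isEquivalent_prod_one_add (c := c) (hN N le_rfl).2
    (fun s hs => by linarith [(hN s hs).1.1]) hxO hsum
  set P : ℕ → ℝ := fun t => ∏ s ∈ Ico N t, (1 + x s)
  have hform : ∀ t, N ≤ t → a t = P t * (a N + ∑ s ∈ Ico N t, q s / P (s + 1)) :=
    fun t ht => eq_prod_mul_add_sum_div_prod (fun s hs => by linarith [(hN s hs).1.1])
      (fun t ht => (hN t ht).1.2) ht
  have hterm : (fun s => q s / P (s + 1)) ~[atTop] fun s => κ / K * (Real.log s ^ m / s) := by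
    refine (hq.div (hPK.prod_Ico_succ hx0)).congr_right ?_
    filter_upwards [eventually_gt_atTop 0] with s hs
    have hs : (0 : ℝ) < s := by exact_mod_cast hs
    simp only [Pi.div_apply]
    rw [Real.rpow_sub_one hs.ne']
    field_simp
  have hS := isEquivalent_sum_Ico_of_isEquivalent_log_pow_div (div_pos hκ hK) N m hterm
  have hStop : Tendsto (norm ∘ fun t : ℕ => κ / K * (Real.log t ^ (m + 1) / (m + 1)))
      atTop atTop :=
    tendsto_norm_atTop_atTop.comp (((tendsto_log_natCast_pow_atTop m.succ_ne_zero).atTop_div_const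
      (by positivity)).const_mul_atTop (div_pos hκ hK))
  have ha : a ~[atTop] fun t => κ / (m + 1) * (Real.log t ^ (m + 1) * (t : ℝ) ^ c) := by
    refine ((hPK.mul (hS.const_add_of_norm_tendsto_atTop (c := a N) hStop)).congr_left ?_)
      |>.congr_right (.of_forall fun t => ?_)
    · filter_upwards [eventually_ge_atTop N] with t ht
      exact (hform t ht).symm
    · simp only [Pi.mul_apply]
      field_simp
  refine ha.tendsto_div_of_const_mul ?_
  filter_upwards [eventually_ge_atTop 2] with t ht
  have ht : (2 : ℝ) ≤ t := by exact_mod_cast ht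
  have hlog : 0 < Real.log t := Real.log_pos (by linarith)
  positivity

theorem stmt_10_general (c c₂ : ℝ) (hc₂ : 0 < c₂)
    (m : ℕ) (ε : ℝ) (hε : 0 < ε) (a b d : ℕ → ℝ)
    (hrec : ∀ t : ℕ, 1 ≤ t → a (t + 1) = a t + c * d t * a t / t + c₂ * b t)
    (hd : Tendsto (fun t : ℕ => (t : ℝ) ^ ε * (d t - 1)) atTop (𝓝 0))
    (hbas : Tendsto (fun t : ℕ => b t / ((Real.log t) ^ m * (t : ℝ) ^ (c - 1)))
      atTop (𝓝 1)) :
    ∃ C : ℝ, 0 < C ∧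
      Tendsto (fun t : ℕ => a t / ((Real.log t) ^ (m + 1) * (t : ℝ) ^ c))
        atTop (𝓝 C) := by
  have hdO := isBigO_rpow_neg_of_isBigO_rpow_mul (hd.isBigO_one ℝ)
  have hd1 : Tendsto d atTop (𝓝 1) := by
    simpa using (hdO.trans_tendsto
      ((tendsto_rpow_neg_atTop hε).comp tendsto_natCast_atTop_atTop)).add_const 1
  refine ⟨c₂ / (m + 1), by positivity, tendsto_div_log_pow_mul_rpow_of_recurrence (c := c)
    (x := fun s => c * d s / s) (q := fun s => c₂ * b s) hc₂ ?_ ?_ ?_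
    (IsEquivalent.refl.mul (isEquivalent_of_tendsto_one hbas))⟩
  · refine (((hd1.isBigO_one ℝ).const_mul_left c).mul
      (isBigO_refl (fun s : ℕ => (s : ℝ)⁻¹) atTop)).congr' (.of_forall fun s => ?_)
      (.of_forall fun s => one_mul _)
    simp [div_eq_mul_inv]
  · refine ((summable_div_natCast_of_isBigO_rpow_neg hε hdO).mul_left c).congr fun s => ?_
    ring
  · filter_upwards [eventually_ge_atTop 1] with t ht
    rw [hrec t ht]
    ring

/-- Recursion asymptotics, boundary case `c₁ = c₃ = c`: under the same recursion,
`aₜ/((log t)^{m+1} t^{c})` converges to a positive constant. -/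
theorem stmt_10 (c c₂ : ℝ) (hc : 0 < c) (hc₂ : 0 < c₂)
    (m : ℕ) (ε : ℝ) (hε : 0 < ε) (a b d : ℕ → ℝ)
    (ha1 : 0 < a 1) (hb : ∀ t : ℕ, 1 ≤ t → 0 < b t)
    (hrec : ∀ t : ℕ, 1 ≤ t → a (t + 1) = a t + c * d t * a t / t + c₂ * b t)
    (hd : Tendsto (fun t : ℕ => (t : ℝ) ^ ε * (d t - 1)) atTop (𝓝 0))
    (hbas : Tendsto (fun t : ℕ => b t / ((Real.log t) ^ m * (t : ℝ) ^ (c - 1)))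
      atTop (𝓝 1)) :
    ∃ C : ℝ, 0 < C ∧
      Tendsto (fun t : ℕ => a t / ((Real.log t) ^ (m + 1) * (t : ℝ) ^ c))
        atTop (𝓝 C) :=
  stmt_10_general c c₂ hc₂ m ε hε a b d hrec hd hbas
end

section
/- Let p_r, p_b : ℕ → ℝ be nonnegative summable functions (indexed by k ≥ 1), and let h_r, h_b : ℕ → ℝ be nonnegative nondecreasing functions such that h_r(k) ≤ h_b(k) for every k, the series Σₖ h_r(k)p_r(k) and Σₖ h_b(k)p_b(k) converge, and p_r(i)·p_b(j) ≤ p_r(j)·p_b(i) for all i ≥ j ≥ 1 (likelihood-ratio ordering). Then (Σ_{k≥1} h_r(k)p_r(k)) · (Σ_{k≥1} p_b(k)) ≤ (Σ_{k≥1} p_r(k)) · (Σ_{k≥1} h_b(k)p_b(k)). In particular, if the denominators are positive, the ratio of expected gains Σh_r p_r / Σh_b p_b is at most the ratio of masses Σp_r / Σp_b. -/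
/-!
Summing the pointwise inequality `(h i - h j) (P i Q j - P j Q i) ≤ 0`, which holds because `h` is
monotone while `P / Q` is antitone, over all pairs `(i, j)` gives
`(∑ h P) (∑ Q) ≤ (∑ P) (∑ h Q)`: a weighted Chebyshev sum inequality. It passes to the series through
the partial sums. Replacing `h_r` by the larger `h_b` on the right finishes the proof.
-/

section LikelihoodRatio

variable {ι R : Type*} [LinearOrder ι] [CommRing R] [LinearOrder R] [IsStrictOrderedRing R]

lemma mul_sub_mul_nonpos_of_likelihood_ratio {h P Q : ι → R} (hh : Monotone h)
    (hLR : ∀ i j, j ≤ i → P i * Q j ≤ P j * Q i) (i j : ι) :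
    (h i - h j) * (P i * Q j - P j * Q i) ≤ 0 := by
  rcases le_total j i with hji | hij
  · exact mul_nonpos_of_nonneg_of_nonpos (sub_nonneg.2 (hh hji)) (sub_nonpos.2 (hLR i j hji))
  · exact mul_nonpos_of_nonpos_of_nonneg (sub_nonpos.2 (hh hij)) (sub_nonneg.2 (hLR j i hij))

lemma Finset.sum_mul_sum_le_of_likelihood_ratio {h P Q : ι → R} (hh : Monotone h)
    (hLR : ∀ i j, j ≤ i → P i * Q j ≤ P j * Q i) (s : Finset ι) :
    (∑ i ∈ s, h i * P i) * ∑ i ∈ s, Q i ≤ (∑ i ∈ s, P i) * ∑ i ∈ s, h i * Q i := by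
  have hpairs : ∑ i ∈ s, ∑ j ∈ s, (h i - h j) * (P i * Q j - P j * Q i) ≤ 0 :=
    Finset.sum_nonpos fun i _ => Finset.sum_nonpos fun j _ =>
      mul_sub_mul_nonpos_of_likelihood_ratio hh hLR i j
  have hexpand : ∑ i ∈ s, ∑ j ∈ s, (h i - h j) * (P i * Q j - P j * Q i) =
      2 * ((∑ i ∈ s, h i * P i) * ∑ i ∈ s, Q i - (∑ i ∈ s, h i * Q i) * ∑ i ∈ s, P i) := by
    set f : ι → ι → R := fun i j => h i * P i * Q j - h i * Q i * P j
    have hsplit : ∀ i j, (h i - h j) * (P i * Q j - P j * Q i) = f i j + f j i := fun i j => by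
      simp only [f]; ring
    have hf : ∑ i ∈ s, ∑ j ∈ s, f i j =
        (∑ i ∈ s, h i * P i) * ∑ i ∈ s, Q i - (∑ i ∈ s, h i * Q i) * ∑ i ∈ s, P i := by
      simp only [f, Finset.sum_mul_sum, Finset.sum_sub_distrib]
    simp only [hsplit, Finset.sum_add_distrib]
    rw [Finset.sum_comm (f := fun i j => f j i), hf, two_mul]
  rw [hexpand, mul_comm (∑ i ∈ s, h i * Q i)] at hpairs
  linarith

end LikelihoodRatio

lemma tsum_mul_tsum_le_of_likelihood_ratio {h P Q : ℕ → ℝ} (hh : Monotone h)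
    (hLR : ∀ i j, j ≤ i → P i * Q j ≤ P j * Q i) (hP : Summable P) (hQ : Summable Q)
    (hhP : Summable fun i => h i * P i) (hhQ : Summable fun i => h i * Q i) :
    (∑' i, h i * P i) * ∑' i, Q i ≤ (∑' i, P i) * ∑' i, h i * Q i :=
  le_of_tendsto_of_tendsto'
    (hhP.hasSum.tendsto_sum_nat.mul hQ.hasSum.tendsto_sum_nat)
    (hP.hasSum.tendsto_sum_nat.mul hhQ.hasSum.tendsto_sum_nat)
    fun n => Finset.sum_mul_sum_le_of_likelihood_ratio hh hLR (Finset.range n)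

theorem stmt_13_general (pr pb hr hb : ℕ → ℝ)
    (hpr : ∀ k : ℕ, 1 ≤ k → 0 ≤ pr k) (hpb : ∀ k : ℕ, 1 ≤ k → 0 ≤ pb k)
    (hhr : ∀ k : ℕ, 1 ≤ k → 0 ≤ hr k)
    (hhrmono : ∀ j k : ℕ, 1 ≤ j → j ≤ k → hr j ≤ hr k)
    (hrb : ∀ k : ℕ, 1 ≤ k → hr k ≤ hb k)
    (hSpr : Summable (fun k : ℕ => pr (k + 1)))
    (hSpb : Summable (fun k : ℕ => pb (k + 1)))
    (hShr : Summable (fun k : ℕ => hr (k + 1) * pr (k + 1)))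
    (hShb : Summable (fun k : ℕ => hb (k + 1) * pb (k + 1)))
    (hLR : ∀ i j : ℕ, 1 ≤ j → j ≤ i → pr i * pb j ≤ pr j * pb i) :
    (∑' k : ℕ, hr (k + 1) * pr (k + 1)) * (∑' k : ℕ, pb (k + 1)) ≤
      (∑' k : ℕ, pr (k + 1)) * (∑' k : ℕ, hb (k + 1) * pb (k + 1)) := by
  have hrb_pb : ∀ k : ℕ, hr (k + 1) * pb (k + 1) ≤ hb (k + 1) * pb (k + 1) := fun k =>
    mul_le_mul_of_nonneg_right (hrb _ k.succ_pos) (hpb _ k.succ_pos)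
  have hShrpb : Summable fun k : ℕ => hr (k + 1) * pb (k + 1) :=
    hShb.of_nonneg_of_le (fun k => mul_nonneg (hhr _ k.succ_pos) (hpb _ k.succ_pos)) hrb_pb
  calc (∑' k : ℕ, hr (k + 1) * pr (k + 1)) * (∑' k : ℕ, pb (k + 1))
      ≤ (∑' k : ℕ, pr (k + 1)) * (∑' k : ℕ, hr (k + 1) * pb (k + 1)) :=
        tsum_mul_tsum_le_of_likelihood_ratio
          (fun j k hjk => hhrmono _ _ j.succ_pos (Nat.succ_le_succ hjk))
          (fun i j hji => hLR _ _ j.succ_pos (Nat.succ_le_succ hji)) hSpr hSpb hShr hShrpb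
    _ ≤ (∑' k : ℕ, pr (k + 1)) * (∑' k : ℕ, hb (k + 1) * pb (k + 1)) :=
        mul_le_mul_of_nonneg_left (hShrpb.tsum_le_tsum hrb_pb hShb)
          (tsum_nonneg fun k => hpr _ k.succ_pos)

/-- Likelihood-ratio ordering implies the ratio of expected gains is at most the
ratio of masses: if `p_r, p_b ≥ 0` are summable on `k ≥ 1`, `h_r, h_b ≥ 0` are
nondecreasing with `h_r ≤ h_b`, the gain series converge, and
`p_r(i)p_b(j) ≤ p_r(j)p_b(i)` for `i ≥ j ≥ 1`, then
`(Σ h_r p_r)(Σ p_b) ≤ (Σ p_r)(Σ h_b p_b)`. -/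
theorem stmt_13 (pr pb hr hb : ℕ → ℝ)
    (hpr : ∀ k : ℕ, 1 ≤ k → 0 ≤ pr k) (hpb : ∀ k : ℕ, 1 ≤ k → 0 ≤ pb k)
    (hhr : ∀ k : ℕ, 1 ≤ k → 0 ≤ hr k) (hhb : ∀ k : ℕ, 1 ≤ k → 0 ≤ hb k)
    (hhrmono : ∀ j k : ℕ, 1 ≤ j → j ≤ k → hr j ≤ hr k)
    (hhbmono : ∀ j k : ℕ, 1 ≤ j → j ≤ k → hb j ≤ hb k)
    (hrb : ∀ k : ℕ, 1 ≤ k → hr k ≤ hb k)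
    (hSpr : Summable (fun k : ℕ => pr (k + 1)))
    (hSpb : Summable (fun k : ℕ => pb (k + 1)))
    (hShr : Summable (fun k : ℕ => hr (k + 1) * pr (k + 1)))
    (hShb : Summable (fun k : ℕ => hb (k + 1) * pb (k + 1)))
    (hLR : ∀ i j : ℕ, 1 ≤ j → j ≤ i → pr i * pb j ≤ pr j * pb i) :
    (∑' k : ℕ, hr (k + 1) * pr (k + 1)) * (∑' k : ℕ, pb (k + 1)) ≤
      (∑' k : ℕ, pr (k + 1)) * (∑' k : ℕ, hb (k + 1) * pb (k + 1)) :=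
  stmt_13_general pr pb hr hb hpr hpb hhr hhrmono hrb hSpr hSpb hShr hShb hLR
end
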